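/- In a residuated lattice, if C is a ∨-closed subset (closed under joins) disjoint from an α-filter F, then F is contained in an α-filter P maximal with respect to being disjoint from C, and any such maximal P is a prime filter. -/

import Mathlib

/-- A (bounded, integral, commutative) residuated lattice. -/
class ResLattice (A : Type*) extends Lattice A, CommMonoid A, OrderBot A where
  himp : A → A → A
  adjunction : ∀ x y z : A, x * y ≤ z ↔ x ≤ himp y z
  le_one : ∀ x : A, x ≤ 1

variable {A : Type*} [ResLattice A]

/-- Coannihilator of a subset: `X^⊥ = {a | a ⊔ x = 1 for all x ∈ X}`. -/
def Coann (X : Set A) : Set A := {a | ∀ x ∈ X, a ⊔ x = 1}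

/-- Coannulet of an element: `x^⊥`. -/
def rperp (x : A) : Set A := Coann {x}

/-- The principal filter generated by `x`. -/
def PFil (x : A) : Set A := {a | ∃ n : ℕ, 0 < n ∧ x ^ n ≤ a}

/-- Filters of a residuated lattice. -/
def IsRLFilter (F : Set A) : Prop :=
  F.Nonempty ∧ (∀ x ∈ F, ∀ y ∈ F, x * y ∈ F) ∧ (∀ x ∈ F, ∀ y : A, x ⊔ y ∈ F)

/-- Prime filters. -/
def IsRLPrime (P : Set A) : Prop :=
  IsRLFilter P ∧ P ≠ Set.univ ∧ ∀ x y : A, x ⊔ y ∈ P → x ∈ P ∨ y ∈ P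

/-- Minimal prime filters. -/
def IsRLMinPrime (P : Set A) : Prop :=
  IsRLPrime P ∧ ∀ Q : Set A, IsRLPrime Q → Q ⊆ P → Q = P

/-- Quasicomplemented residuated lattice. -/
def Quasicomplemented (A : Type*) [ResLattice A] : Prop :=
  ∀ x : A, ∃ y : A, Coann (rperp x) = rperp y

/-- α-filters. -/
def IsAlphaFilter (F : Set A) : Prop :=
  IsRLFilter F ∧ ∀ x ∈ F, Coann (rperp x) ⊆ F

/-- The α-filter generated by a subset. -/
def alphaGen (X : Set A) : Set A := ⋂₀ {G : Set A | IsAlphaFilter G ∧ X ⊆ G}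

/-!
Existence is Zorn's lemma: α-filters are closed under unions of chains. For primality, suppose
`x ⊔ y ∈ P` with `x, y ∉ P`. By maximality the α-filters generated by `P ∪ {x}` and `P ∪ {y}`,
namely `⋃ (f ⊙ xⁿ)^⊥⊥` and `⋃ (g ⊙ yᵐ)^⊥⊥` over `f, g ∈ P`, meet `C`, say in `c` and `d`. Then
`c ⊔ d ∈ (f xⁿ ⊔ g yᵐ)^⊥⊥ ⊆ (f g (xⁿ ⊔ yᵐ))^⊥⊥ ⊆ P`, because `xⁿ ⊔ yᵐ ∈ P` whenever `x ⊔ y ∈ P`.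
So `c ⊔ d ∈ P ∩ C`, a contradiction.
-/

namespace ResLattice

instance : IsOrderedMonoid A where
  mul_le_mul_left a b h c :=
    (adjunction a c (b * c)).mpr (h.trans ((adjunction b c (b * c)).mp le_rfl))

theorem eq_one_of_one_le {x : A} (h : 1 ≤ x) : x = 1 :=
  le_antisymm (le_one x) h

theorem mul_sup (x y z : A) : x * (y ⊔ z) = x * y ⊔ x * z := by
  refine le_antisymm ?_ (sup_le (mul_le_mul_right le_sup_left x) (mul_le_mul_right le_sup_right x))
  rw [mul_comm, adjunction]
  exact sup_le ((adjunction y x _).mp (mul_comm x y ▸ le_sup_left))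
    ((adjunction z x _).mp (mul_comm x z ▸ le_sup_right))

theorem sup_mul_sup_le (a b c : A) : (a ⊔ b) * (a ⊔ c) ≤ a ⊔ b * c := by
  rw [mul_sup, mul_comm (a ⊔ b) c, mul_sup]
  exact sup_le (mul_le_of_le_one_left' (le_one _) |>.trans le_sup_left)
    (sup_le (mul_le_of_le_one_left' (le_one _) |>.trans le_sup_left)
      (le_sup_right.trans_eq' (mul_comm b c)))

theorem sup_mul_eq_one {a b c : A} (hb : a ⊔ b = 1) (hc : a ⊔ c = 1) : a ⊔ b * c = 1 :=
  eq_one_of_one_le (by simpa [hb, hc] using sup_mul_sup_le a b c)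

theorem sup_eq_one_of_le {a b u v : A} (h : a ⊔ u = 1) (hab : a ≤ b) (huv : u ≤ v) :
    b ⊔ v = 1 :=
  eq_one_of_one_le (h.ge.trans (sup_le_sup hab huv))

end ResLattice

open ResLattice

section Coannulet

theorem mem_coann_rperp {a u : A} : a ∈ Coann (rperp u) ↔ ∀ b, b ⊔ u = 1 → a ⊔ b = 1 := by
  simp [Coann, rperp]

theorem self_mem_coann_rperp (u : A) : u ∈ Coann (rperp u) :=
  mem_coann_rperp.mpr fun b hb => sup_comm b u ▸ hb

theorem mem_coann_rperp_of_le {a b u : A} (ha : a ∈ Coann (rperp u)) (hab : a ≤ b) :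
    b ∈ Coann (rperp u) :=
  mem_coann_rperp.mpr fun c hc => sup_eq_one_of_le (mem_coann_rperp.mp ha c hc) hab le_rfl

theorem coann_rperp_anti {u v : A} (h : u ≤ v) : Coann (rperp v) ⊆ Coann (rperp u) :=
  fun _ ha => mem_coann_rperp.mpr fun b hb =>
    mem_coann_rperp.mp ha b (sup_eq_one_of_le hb le_rfl h)

theorem mul_mem_coann_rperp_mul {a b u v : A} (ha : a ∈ Coann (rperp u))
    (hb : b ∈ Coann (rperp v)) : a * b ∈ Coann (rperp (u * v)) := by
  refine mem_coann_rperp.mpr fun c hc => ?_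
  have hca : c ⊔ a = 1 := sup_comm a c ▸
    mem_coann_rperp.mp ha c (sup_eq_one_of_le hc le_rfl (mul_le_of_le_one_right' (le_one v)))
  have hcb : c ⊔ b = 1 := sup_comm b c ▸
    mem_coann_rperp.mp hb c (sup_eq_one_of_le hc le_rfl (mul_le_of_le_one_left' (le_one u)))
  exact sup_comm c _ ▸ sup_mul_eq_one hca hcb

theorem sup_mem_coann_rperp_sup {a b u v : A} (ha : a ∈ Coann (rperp u))
    (hb : b ∈ Coann (rperp v)) : a ⊔ b ∈ Coann (rperp (u ⊔ v)) := by
  refine mem_coann_rperp.mpr fun c hc => ?_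
  have hac : a ⊔ (c ⊔ v) = 1 := mem_coann_rperp.mp ha _ (by rwa [sup_right_comm, sup_assoc])
  have hbc : b ⊔ (a ⊔ c) = 1 := mem_coann_rperp.mp hb _ (by rwa [sup_assoc])
  rwa [sup_comm a b, sup_assoc]

theorem coann_rperp_subset_of_mem {a u : A} (ha : a ∈ Coann (rperp u)) :
    Coann (rperp a) ⊆ Coann (rperp u) :=
  fun _ hb => mem_coann_rperp.mpr fun c hc =>
    mem_coann_rperp.mp hb c (sup_comm a c ▸ mem_coann_rperp.mp ha c hc)

end Coannulet

namespace IsRLFilter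

variable {F : Set A}

theorem mem_of_le (hF : IsRLFilter F) {x y : A} (hx : x ∈ F) (h : x ≤ y) : y ∈ F :=
  sup_eq_right.mpr h ▸ hF.2.2 x hx y

theorem sup_mul_mem (hF : IsRLFilter F) {a b c : A} (hb : a ⊔ b ∈ F) (hc : a ⊔ c ∈ F) :
    a ⊔ b * c ∈ F :=
  hF.mem_of_le (hF.2.1 _ hb _ hc) (sup_mul_sup_le a b c)

theorem sup_pow_mem (hF : IsRLFilter F) {a b : A} (h : a ⊔ b ∈ F) (n : ℕ) : a ⊔ b ^ n ∈ F := by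
  induction n with
  | zero => exact hF.mem_of_le h (sup_le_sup_left (pow_zero b ▸ le_one b) a)
  | succ n ih => exact pow_succ b n ▸ hF.sup_mul_mem ih h

theorem pow_sup_pow_mem (hF : IsRLFilter F) {x y : A} (h : x ⊔ y ∈ F) (m n : ℕ) :
    x ^ m ⊔ y ^ n ∈ F :=
  sup_comm (y ^ n) _ ▸ hF.sup_pow_mem (sup_comm x _ ▸ hF.sup_pow_mem h n) m

end IsRLFilter

theorem isAlphaFilter_sUnion {c : Set (Set A)} (hc : ∀ G ∈ c, IsAlphaFilter G)
    (hchain : IsChain (· ⊆ ·) c) (hne : c.Nonempty) : IsAlphaFilter (⋃₀ c) := by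
  obtain ⟨G₀, hG₀⟩ := hne
  refine ⟨⟨(hc G₀ hG₀).1.1.mono (Set.subset_sUnion_of_mem hG₀), ?_, ?_⟩, ?_⟩
  · rintro a ⟨G, hG, ha⟩ b ⟨H, hH, hb⟩
    rcases hchain.total hG hH with hGH | hHG
    · exact ⟨H, hH, (hc H hH).1.2.1 a (hGH ha) b hb⟩
    · exact ⟨G, hG, (hc G hG).1.2.1 a ha b (hHG hb)⟩
  · rintro a ⟨G, hG, ha⟩ y
    exact ⟨G, hG, (hc G hG).1.2.2 a ha y⟩
  · rintro a ⟨G, hG, ha⟩ b hb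
    exact ⟨G, hG, (hc G hG).2 a ha hb⟩

/-- The α-filter generated by `P ∪ {x}` when `P` is an α-filter. -/
def alphaAdjoin (P : Set A) (x : A) : Set A :=
  {a | ∃ f ∈ P, ∃ n : ℕ, a ∈ Coann (rperp (f * x ^ n))}

section alphaAdjoin

variable {P : Set A}

theorem subset_alphaAdjoin (x : A) : P ⊆ alphaAdjoin P x :=
  fun f hf => ⟨f, hf, 0, by simpa using self_mem_coann_rperp f⟩

theorem mem_alphaAdjoin (hP : P.Nonempty) (x : A) : x ∈ alphaAdjoin P x := by
  obtain ⟨f, hf⟩ := hP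
  exact ⟨f, hf, 1, coann_rperp_anti (by simpa using mul_le_of_le_one_left' (le_one f))
    (self_mem_coann_rperp x)⟩

theorem isAlphaFilter_alphaAdjoin (hP : IsAlphaFilter P) (x : A) :
    IsAlphaFilter (alphaAdjoin P x) := by
  refine ⟨⟨hP.1.1.mono (subset_alphaAdjoin x), ?_, ?_⟩, ?_⟩
  · rintro a ⟨f, hf, m, ha⟩ b ⟨g, hg, n, hb⟩
    refine ⟨f * g, hP.1.2.1 f hf g hg, m + n, ?_⟩
    rw [pow_add, mul_mul_mul_comm]
    exact mul_mem_coann_rperp_mul ha hb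
  · rintro a ⟨f, hf, n, ha⟩ y
    exact ⟨f, hf, n, mem_coann_rperp_of_le ha le_sup_left⟩
  · rintro a ⟨f, hf, n, ha⟩ b hb
    exact ⟨f, hf, n, coann_rperp_subset_of_mem ha hb⟩

end alphaAdjoin

theorem exists_maximal_isAlphaFilter_inter_eq_empty {C F : Set A} (hF : IsAlphaFilter F)
    (hdisj : F ∩ C = ∅) :
    ∃ P : Set A, IsAlphaFilter P ∧ F ⊆ P ∧ P ∩ C = ∅ ∧
      ∀ Q : Set A, IsAlphaFilter Q → P ⊆ Q → Q ∩ C = ∅ → Q = P := by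
  let S : Set (Set A) := {G | IsAlphaFilter G ∧ F ⊆ G ∧ G ∩ C = ∅}
  have hchain : ∀ c ⊆ S, IsChain (· ⊆ ·) c → c.Nonempty → ∃ ub ∈ S, ∀ G ∈ c, G ⊆ ub := by
    intro c hcS hchain hne
    obtain ⟨G₀, hG₀⟩ := hne
    refine ⟨⋃₀ c, ⟨isAlphaFilter_sUnion (fun G hG => (hcS hG).1) hchain ⟨G₀, hG₀⟩,
      (hcS hG₀).2.1.trans (Set.subset_sUnion_of_mem hG₀), ?_⟩,
      fun G hG => Set.subset_sUnion_of_mem hG⟩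
    rw [← Set.disjoint_iff_inter_eq_empty, Set.disjoint_sUnion_left]
    exact fun G hG => Set.disjoint_iff_inter_eq_empty.mpr (hcS hG).2.2
  obtain ⟨P, hFP, hPmax⟩ := zorn_subset_nonempty S hchain F ⟨hF, subset_rfl, hdisj⟩
  exact ⟨P, hPmax.prop.1, hFP, hPmax.prop.2.2, fun Q hQ hPQ hQC =>
    hPmax.eq_of_subset ⟨hQ, hFP.trans hPQ, hQC⟩ hPQ |>.symm⟩

theorem IsAlphaFilter.isRLPrime_of_maximal {C P : Set A} (hC : C.Nonempty)
    (hCc : ∀ x ∈ C, ∀ y ∈ C, x ⊔ y ∈ C) (hP : IsAlphaFilter P) (hPC : P ∩ C = ∅)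
    (hmax : ∀ Q : Set A, IsAlphaFilter Q → P ⊆ Q → Q ∩ C = ∅ → Q = P) : IsRLPrime P := by
  have notMem_C : ∀ a ∈ P, a ∉ C := fun a ha haC =>
    Set.eq_empty_iff_forall_notMem.mp hPC a ⟨ha, haC⟩
  have meets : ∀ z ∉ P, ∃ c ∈ C, c ∈ alphaAdjoin P z := by
    intro z hz
    by_contra! h
    have hdisj : alphaAdjoin P z ∩ C = ∅ :=
      Set.eq_empty_iff_forall_notMem.mpr fun a ⟨ha, haC⟩ => h a haC ha
    exact hz (hmax _ (isAlphaFilter_alphaAdjoin hP z) (subset_alphaAdjoin z) hdisj ▸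
      mem_alphaAdjoin hP.1.1 z)
  refine ⟨hP.1, fun h => ?_, fun x y hxy => ?_⟩
  · obtain ⟨c, hc⟩ := hC
    exact notMem_C c (h ▸ Set.mem_univ c) hc
  by_contra! ⟨hx, hy⟩
  obtain ⟨c, hcC, f, hf, m, hc⟩ := meets x hx
  obtain ⟨d, hdC, g, hg, n, hd⟩ := meets y hy
  have hle : f * g * (x ^ m ⊔ y ^ n) ≤ f * x ^ m ⊔ g * y ^ n := by
    rw [ResLattice.mul_sup]
    exact sup_le_sup (mul_le_mul_left (mul_le_of_le_one_right' (le_one g)) _)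
      (mul_le_mul_left (mul_le_of_le_one_left' (le_one f)) _)
  have hmem : f * g * (x ^ m ⊔ y ^ n) ∈ P :=
    hP.1.2.1 _ (hP.1.2.1 f hf g hg) _ (hP.1.pow_sup_pow_mem hxy m n)
  exact notMem_C _ (hP.2 _ hmem (coann_rperp_anti hle (sup_mem_coann_rperp_sup hc hd)))
    (hCc c hcC d hdC)

theorem stmt13 (C F : Set A) (hC : C.Nonempty)
    (hCc : ∀ x ∈ C, ∀ y ∈ C, x ⊔ y ∈ C)
    (hF : IsAlphaFilter F) (hdisj : F ∩ C = ∅) :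
    (∃ P : Set A, IsAlphaFilter P ∧ F ⊆ P ∧ P ∩ C = ∅ ∧
      ∀ Q : Set A, IsAlphaFilter Q → P ⊆ Q → Q ∩ C = ∅ → Q = P) ∧
    (∀ P : Set A, IsAlphaFilter P → F ⊆ P → P ∩ C = ∅ →
      (∀ Q : Set A, IsAlphaFilter Q → P ⊆ Q → Q ∩ C = ∅ → Q = P) →
      IsRLPrime P) :=
  ⟨exists_maximal_isAlphaFilter_inter_eq_empty hF hdisj,
    fun _ hP _ hPC hmax => hP.isRLPrime_of_maximal hC hCc hPC hmax⟩
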